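/- Let p be a prime with p ≡ 1 (mod 3). Then U_p = Q^{p(p-1)/3} A Q^{-(p-1)/3} A^{-p}, where A = [[1,0],[1,1]], Q = [[1,3/p],[0,1]], U_p = [[p,0],[0,1/p]]. In particular U_p lies in the subgroup of SL_2(Z[1/p]) generated by A and Q. -/

import Mathlib

abbrev SL2Q := Matrix.SpecialLinearGroup (Fin 2) ℚ

/-- A = [[1,0],[1,1]] -/
def matA : SL2Q := ⟨!![1,0;1,1], by norm_num [Matrix.det_fin_two_of]⟩
/-- B = [[0,1],[-1,0]] -/
def matB : SL2Q := ⟨!![0,1;-1,0], by norm_num [Matrix.det_fin_two_of]⟩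
/-- Q_q = [[1,q],[0,1]] -/
def matQ (q : ℚ) : SL2Q := ⟨!![1,q;0,1], by norm_num [Matrix.det_fin_two_of]⟩
/-- U_p = [[p,0],[0,1/p]] -/
def matU (p : ℚ) (hp : p ≠ 0) : SL2Q := ⟨!![p,0;0,p⁻¹], by rw [Matrix.det_fin_two_of]; field_simp; ring⟩
/-- lower unipotent [[1,0],[x,1]] -/
def matL (x : ℚ) : SL2Q := ⟨!![1,0;x,1], by norm_num [Matrix.det_fin_two_of]⟩

/-!
`q ↦ Q_q` and `x ↦ L_x` are homomorphisms from `(ℚ, +)`, so with `k = (p - 1) / 3` the powers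
are `Q_{3/p} ^ (p k) = Q_{p - 1}`, `Q_{3/p} ^ (-k) = Q_{p⁻¹ - 1}` and `A ^ (-p) = L_{-p}`. For every
`a ≠ 0` one checks directly that `Q_{a - 1} A Q_{a⁻¹ - 1} L_{-a} = U_a`.
-/

@[simp] lemma coe_matA : (matA : Matrix (Fin 2) (Fin 2) ℚ) = !![1, 0; 1, 1] := rfl

@[simp] lemma coe_matQ (q : ℚ) : (matQ q : Matrix (Fin 2) (Fin 2) ℚ) = !![1, q; 0, 1] := rfl

@[simp] lemma coe_matL (x : ℚ) : (matL x : Matrix (Fin 2) (Fin 2) ℚ) = !![1, 0; x, 1] := rfl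

@[simp] lemma coe_matU (a : ℚ) (ha : a ≠ 0) :
    (matU a ha : Matrix (Fin 2) (Fin 2) ℚ) = !![a, 0; 0, a⁻¹] := rfl

def matQChar : AddChar ℚ SL2Q where
  toFun := matQ
  map_zero_eq_one' := by ext i j; fin_cases i <;> fin_cases j <;> simp
  map_add_eq_mul' a b := by ext i j; fin_cases i <;> fin_cases j <;> simp [add_comm]

def matLChar : AddChar ℚ SL2Q where
  toFun := matL
  map_zero_eq_one' := by ext i j; fin_cases i <;> fin_cases j <;> simp
  map_add_eq_mul' a b := by ext i j; fin_cases i <;> fin_cases j <;> simp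

lemma matQ_zpow (q : ℚ) (n : ℤ) : matQ q ^ n = matQ (n * q) := by
  rw [← zsmul_eq_mul]
  exact (matQChar.map_zsmul_eq_zpow n q).symm

lemma matA_zpow (n : ℤ) : matA ^ n = matL n := by
  rw [← mul_one (n : ℚ), ← zsmul_eq_mul]
  exact (matLChar.map_zsmul_eq_zpow n 1).symm

lemma matU_eq_matQ_mul_matA_mul_matQ_mul_matL (a : ℚ) (ha : a ≠ 0) :
    matU a ha = matQ (a - 1) * matA * matQ (a⁻¹ - 1) * matL (-a) := by
  ext i j
  fin_cases i <;> fin_cases j <;> simp [mul_sub, ha]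

theorem stmt5 (p : ℕ) (hp : p.Prime) (h1 : p % 3 = 1) :
    matU p (Nat.cast_ne_zero.mpr hp.ne_zero) =
      (matQ (3/p))^((p:ℤ)*((p:ℤ)-1)/3) * matA * (matQ (3/p))^(-(((p:ℤ)-1)/3)) * matA^(-(p:ℤ)) ∧
    matU p (Nat.cast_ne_zero.mpr hp.ne_zero) ∈ Subgroup.closure {matA, matQ (3/p)} := by
  have hp0 : (p : ℚ) ≠ 0 := Nat.cast_ne_zero.mpr hp.ne_zero
  have h3 : (3 : ℤ) ∣ (p : ℤ) - 1 := by omega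
  have hU : matU p hp0 =
      (matQ (3/p))^((p:ℤ)*((p:ℤ)-1)/3) * matA * (matQ (3/p))^(-(((p:ℤ)-1)/3)) * matA^(-(p:ℤ)) := by
    rw [matU_eq_matQ_mul_matA_mul_matQ_mul_matL p hp0, matQ_zpow, matQ_zpow, matA_zpow,
      Int.cast_div (dvd_mul_of_dvd_right h3 _) (by norm_num), Int.cast_neg,
      Int.cast_div h3 (by norm_num)]
    push_cast
    congr 3
    · field_simp
    · field_simp
      ring
  have hA : matA ∈ Subgroup.closure {matA, matQ (3/p)} := Subgroup.subset_closure (by simp)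
  have hQ : matQ (3/p) ∈ Subgroup.closure {matA, matQ (3/p)} := Subgroup.subset_closure (by simp)
  refine ⟨hU, hU ▸ ?_⟩
  exact mul_mem (mul_mem (mul_mem (zpow_mem hQ _) hA) (zpow_mem hQ _)) (zpow_mem hA _)
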